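/- With notation as in the previous statement (A free supercommutative on even x_i, odd θ_i, odd e_i, even u_i; d the odd derivation d(x_i)=e_i, d(θ_i)=u_i, d(e_i)=0=d(u_i); ω = Σ e_i u_i; ι_i the odd derivation with ι_i(e_j)=δ_{ij}): for every f in the subalgebra generated by the x's and θ's with f even, setting α := −Σ_i (∂_{θ_i} f)·ι_i(e_1⋯e_n), there exists β ∈ A such that d(α) = (Σ_{i=1}^n ∂_{x_i}∂_{θ_i} f) · e_1 e_2 ⋯ e_n + ω·β. -/

import Mathlib

/-!
Same model as the previous statement: the free supercommutative superalgebra over `ℚ` on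
even generators `x_i`, even `u_i` (= `dθ_i`), odd `θ_i`, odd `e_i` (= `dx^i`), as the free
`ℚ`-module on the normally-ordered monomial basis `(a, b, S, T) ↦ x^a u^b θ_S e_T`.

`dRham` is the de Rham differential (`d x_i = e_i`, `d θ_i = u_i`, `d e_i = d u_i = 0`),
`Wmul` is multiplication by `ω = ∑ i, e_i u_i`, `AlphaOp` sends
`f · e_1⋯e_n ↦ -∑ i, (∂_{θ_i} f) ιᵢ(e_1⋯e_n)` (for `f` even), and `DeltaTimesTop` is
`f · e_1⋯e_n ↦ (∑ i ∂_{x_i}∂_{θ_i} f) · e_1⋯e_n`, the BV Laplacian of the coefficient.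

Statement: for `f` even in the subalgebra generated by the `x`'s and `θ`'s,
with `α := -∑ i (∂_{θ_i} f) ιᵢ(e_1⋯e_n)`, there is `β` with
`d α = (∑ i ∂_{x_i}∂_{θ_i} f) e_1⋯e_n + ω β`.
-/

noncomputable section

variable (n : ℕ)

/-- normally ordered monomial basis `x^a u^b θ_S e_T` -/
abbrev DBasis := (Fin n →₀ ℕ) × (Fin n →₀ ℕ) × Finset (Fin n) × Finset (Fin n)

/-- the free supercommutative superalgebra on even `x_i, u_i` and odd `θ_i, e_i` -/
abbrev DForms := DBasis n →₀ ℚ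

/-- the Koszul sign `(-1)^{#{j ∈ S | j < i}}` -/
def insSign (i : Fin n) (S : Finset (Fin n)) : ℚ :=
  (-1) ^ (S.filter (· < i)).card

/-- extend a map defined on basis monomials to a linear endomorphism -/
def ofBasis (f : DBasis n → DForms n) : DForms n →ₗ[ℚ] DForms n :=
  Finsupp.lsum ℕ fun b => LinearMap.smulRight (LinearMap.id : ℚ →ₗ[ℚ] ℚ) (f b)

/-- the de Rham differential `d` (`d x_i = e_i`, `d θ_i = u_i`, `d e_i = d u_i = 0`) -/
def dRham : DForms n →ₗ[ℚ] DForms n :=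
  ofBasis n fun b =>
    (∑ i ∈ b.2.2.2ᶜ,
      ((b.1 i : ℚ) * (-1) ^ b.2.2.1.card * insSign n i b.2.2.2) •
        Finsupp.single (b.1 - Finsupp.single i 1, b.2.1, b.2.2.1, insert i b.2.2.2) (1 : ℚ))
    + ∑ i ∈ b.2.2.1,
        insSign n i b.2.2.1 •
          Finsupp.single (b.1, b.2.1 + Finsupp.single i 1, b.2.2.1.erase i, b.2.2.2) (1 : ℚ)

/-- multiplication by the odd symplectic form `ω = ∑ i, e_i u_i` -/
def Wmul : DForms n →ₗ[ℚ] DForms n :=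
  ofBasis n fun b => ∑ i ∈ b.2.2.2ᶜ,
    ((-1 : ℚ) ^ b.2.2.1.card * insSign n i b.2.2.2) •
      Finsupp.single (b.1, b.2.1 + Finsupp.single i 1, b.2.2.1, insert i b.2.2.2) (1 : ℚ)

/-- `α = (-1)^{|f|+1} ∑ i, (∂_{θ_i} f) ιᵢ(e_T)`; for even `f` this is
`-∑ i, (∂_{θ_i} f) ιᵢ(e_T)` -/
def AlphaOp : DForms n →ₗ[ℚ] DForms n :=
  ofBasis n fun b => ∑ i ∈ b.2.2.1 ∩ b.2.2.2,
    ((-1 : ℚ) ^ (b.2.2.1.card + 1) * insSign n i b.2.2.1 * insSign n i b.2.2.2) •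
      Finsupp.single (b.1, b.2.1, b.2.2.1.erase i, b.2.2.2.erase i) (1 : ℚ)

/-- the BV Laplacian applied to the coefficient function:
`f · e_T ↦ (∑ i, ∂_{x_i} ∂_{θ_i} f) · e_T` -/
def DeltaTimesTop : DForms n →ₗ[ℚ] DForms n :=
  ofBasis n fun b => ∑ i ∈ b.2.2.1,
    ((b.1 i : ℚ) * insSign n i b.2.2.1) •
      Finsupp.single (b.1 - Finsupp.single i 1, b.2.1, b.2.2.1.erase i, b.2.2.2) (1 : ℚ)

/-!
By linearity it suffices to treat a monomial `f = x^a u^w θ_S` times `e_1⋯e_n`. In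
`d α = -∑ i, d((∂_{θ_i} f) ιᵢ(e_1⋯e_n))` the `x_i`-derivative restores the missing `e_i` and
gives `(∂_{x_i}∂_{θ_i} f) e_1⋯e_n`, the BV Laplacian. The `θ_j`-derivatives give
`±u_j (∂_{θ_j}∂_{θ_i} f) ιᵢ(e_1⋯e_n)` with `i ≠ j`, and antisymmetry of `∂_{θ_j}∂_{θ_i}` pairs
the `(i, j)` and `(j, i)` terms into `ω` times a multiple of `(∂_{θ_j}∂_{θ_i} f) ι_j ιᵢ(e_1⋯e_n)`.
-/

open Finset

lemma Finsupp.exists_eq_add_of_forall_single {α R N P : Type*} [Ring R] [AddCommGroup N]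
    [Module R N] [AddCommMonoid P] [Module R P] (L M : (α →₀ R) →ₗ[R] N) (W : P →ₗ[R] N)
    (v : α →₀ R) (h : ∀ b ∈ v.support, ∃ β, L (single b 1) = M (single b 1) + W β) :
    ∃ β, L v = M v + W β := by
  have hrange : (L - M) v ∈ LinearMap.range W := by
    rw [← v.sum_single, map_finsuppSum]
    refine Submodule.finsuppSum_mem _ _ _ _ fun b hb => ?_
    obtain ⟨β, hβ⟩ := h b (Finsupp.mem_support_iff.mpr hb)
    rw [← smul_single_one, map_smul]
    exact Submodule.smul_mem _ _ ⟨β, by rw [LinearMap.sub_apply, hβ, add_sub_cancel_left]⟩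
  obtain ⟨β, hβ⟩ := hrange
  exact ⟨β, by rw [← sub_eq_iff_eq_add', ← LinearMap.sub_apply, hβ]⟩

lemma Finset.sum_sum_erase_comm {α M : Type*} [DecidableEq α] [AddCommMonoid M] (S : Finset α)
    (F : α → α → M) :
    ∑ i ∈ S, ∑ j ∈ S.erase i, F i j = ∑ i ∈ S, ∑ j ∈ S.erase i, F j i :=
  sum_comm' fun i j => by simp only [mem_erase]; tauto

lemma ofBasis_single (f : DBasis n → DForms n) (b : DBasis n) (c : ℚ) :
    ofBasis n f (Finsupp.single b c) = c • f b := by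
  simp [ofBasis]

lemma insSign_mul_self (i : Fin n) (S : Finset (Fin n)) : insSign n i S * insSign n i S = 1 := by
  rw [insSign, ← pow_add]
  exact Even.neg_one_pow ⟨_, rfl⟩

lemma insSign_erase_self (i : Fin n) (S : Finset (Fin n)) :
    insSign n i (S.erase i) = insSign n i S := by
  rw [insSign, insSign, filter_erase, erase_eq_of_notMem (by simp)]

lemma insSign_erase_of_mem {i : Fin n} (j : Fin n) {S : Finset (Fin n)} (hi : i ∈ S) :
    insSign n j (S.erase i) = (if i < j then -1 else 1) * insSign n j S := by
  conv_rhs => rw [insSign, ← insert_erase hi, filter_insert]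
  split_ifs with h
  · rw [card_insert_of_notMem fun hm => notMem_erase i S (mem_of_mem_filter _ hm), pow_succ,
      insSign]
    ring
  · rw [insSign, one_mul]

lemma alphaOp_single_univ (a w : Fin n →₀ ℕ) (S : Finset (Fin n)) :
    AlphaOp n (Finsupp.single (a, w, S, univ) 1) =
      ∑ i ∈ S, ((-1 : ℚ) ^ (S.card + 1) * insSign n i S * insSign n i univ) •
        Finsupp.single (a, w, S.erase i, univ.erase i) 1 := by
  simp [AlphaOp, ofBasis_single]

lemma dRham_single_univ_erase (a w : Fin n →₀ ℕ) (S : Finset (Fin n)) (i : Fin n) :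
    dRham n (Finsupp.single (a, w, S, univ.erase i) 1) =
      ((a i : ℚ) * (-1) ^ S.card * insSign n i univ) •
          Finsupp.single (a - Finsupp.single i 1, w, S, univ) 1
        + ∑ j ∈ S, insSign n j S •
          Finsupp.single (a, w + Finsupp.single j 1, S.erase j, univ.erase i) 1 := by
  simp [dRham, ofBasis_single, insSign_erase_self]

lemma wmul_single_univ_erase_erase (a w : Fin n →₀ ℕ) (S : Finset (Fin n)) {i j : Fin n}
    (hij : i ≠ j) :
    Wmul n (Finsupp.single (a, w, S, (univ.erase i).erase j) 1) =
      ((-1 : ℚ) ^ S.card * insSign n i (univ.erase j)) •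
          Finsupp.single (a, w + Finsupp.single i 1, S, univ.erase j) 1
        + ((-1 : ℚ) ^ S.card * insSign n j (univ.erase i)) •
          Finsupp.single (a, w + Finsupp.single j 1, S, univ.erase i) 1 := by
  have hj : j ∈ univ.erase i := mem_erase.mpr ⟨hij.symm, mem_univ j⟩
  have hi : i ∈ univ.erase j := mem_erase.mpr ⟨hij, mem_univ i⟩
  simp only [Wmul, ofBasis_single, one_smul, compl_erase, compl_univ, insert_empty]
  rw [sum_insert (by simp [hij.symm]), sum_singleton, add_comm, insert_erase hj,
    erase_right_comm, insert_erase hi, insSign_erase_self, erase_right_comm, insSign_erase_self]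

def betaCoeff (S : Finset (Fin n)) (i j : Fin n) : ℚ :=
  -(1 / 2) * insSign n i S * insSign n j S * insSign n i univ * insSign n j univ

/-- `β = ½ ∑_{i ≠ j} ±(∂_{θ_j}∂_{θ_i} f) ι_j ιᵢ(e_1⋯e_n)` for `f = x^a u^w θ_S`: multiplying
by `ω` only re-inserts `e_i u_i` or `e_j u_j`, and the `½` compensates for the two orderings of
`{i, j}`. -/
def betaMonomial (a w : Fin n →₀ ℕ) (S : Finset (Fin n)) : DForms n :=
  ∑ i ∈ S, ∑ j ∈ S.erase i, betaCoeff n S i j •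
    Finsupp.single (a, w, (S.erase i).erase j, (univ.erase i).erase j) 1

lemma wmul_betaMonomial (a w : Fin n →₀ ℕ) (S : Finset (Fin n)) :
    Wmul n (betaMonomial n a w S) =
      ∑ i ∈ S, ((-1 : ℚ) ^ (S.card + 1) * insSign n i S * insSign n i univ) •
        ∑ j ∈ S.erase i, insSign n j (S.erase i) •
          Finsupp.single (a, w + Finsupp.single j 1, (S.erase i).erase j, univ.erase i) 1 := by
  simp only [betaMonomial, map_sum, map_smul]
  rw [sum_congr rfl fun i _ => sum_congr rfl fun j hj =>
    by rw [wmul_single_univ_erase_erase n a w _ (mem_erase.mp hj).1.symm, smul_add]]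
  simp only [sum_add_distrib]
  rw [sum_sum_erase_comm S (fun i j => betaCoeff n S i j •
    ((-1 : ℚ) ^ ((S.erase i).erase j).card * insSign n i (univ.erase j)) •
      Finsupp.single (a, w + Finsupp.single i 1, (S.erase i).erase j, univ.erase j) 1),
    ← sum_add_distrib]
  refine sum_congr rfl fun i hi => ?_
  rw [smul_sum, ← sum_add_distrib]
  refine sum_congr rfl fun j hj => ?_
  have hcard : ((S.erase i).erase j).card + 1 + 1 = S.card := by
    rw [card_erase_add_one hj, card_erase_add_one hi]
  rw [erase_right_comm (s := S) (a := j) (b := i), smul_smul, smul_smul, smul_smul, ← add_smul,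
    insSign_erase_of_mem n j (mem_univ i), insSign_erase_of_mem n j hi, ← hcard]
  congr 1
  have hU := insSign_mul_self n j univ
  simp only [betaCoeff, pow_succ]
  split_ifs
  · linear_combination (insSign n i S * insSign n j S * insSign n i univ *
      (-1 : ℚ) ^ ((S.erase i).erase j).card) * hU
  · linear_combination (-(insSign n i S * insSign n j S * insSign n i univ *
      (-1 : ℚ) ^ ((S.erase i).erase j).card)) * hU

lemma deltaTimesTop_single_univ (a w : Fin n →₀ ℕ) (S : Finset (Fin n)) :
    DeltaTimesTop n (Finsupp.single (a, w, S, univ) 1) =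
      ∑ i ∈ S, ((-1 : ℚ) ^ (S.card + 1) * insSign n i S * insSign n i univ) •
        ((a i : ℚ) * (-1) ^ (S.erase i).card * insSign n i univ) •
          Finsupp.single (a - Finsupp.single i 1, w, S.erase i, univ) 1 := by
  rw [DeltaTimesTop, ofBasis_single, one_smul]
  refine sum_congr rfl fun i hi => ?_
  rw [smul_smul, ← card_erase_add_one hi]
  congr 1
  have hU := insSign_mul_self n i univ
  have hp : ((-1 : ℚ) ^ (S.erase i).card) ^ 2 = 1 := by rw [pow_right_comm, neg_one_sq, one_pow]
  simp only [pow_succ]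
  linear_combination -((a i : ℚ) * insSign n i S * ((-1) ^ (S.erase i).card) ^ 2) * hU
    - (a i : ℚ) * insSign n i S * hp

theorem dRham_alphaOp_single_univ (a w : Fin n →₀ ℕ) (S : Finset (Fin n)) :
    dRham n (AlphaOp n (Finsupp.single (a, w, S, univ) 1)) =
      DeltaTimesTop n (Finsupp.single (a, w, S, univ) 1) + Wmul n (betaMonomial n a w S) := by
  rw [alphaOp_single_univ, map_sum, deltaTimesTop_single_univ, wmul_betaMonomial,
    ← sum_add_distrib]
  refine sum_congr rfl fun i _ => ?_
  rw [map_smul, dRham_single_univ_erase, smul_add]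

/-- For `v = f e_1⋯e_n` with `f` even, `d (α v) = (Δ_BV f) e_1⋯e_n` modulo `ω`-exact
terms: the spectral sequence differential `δ₂ = d ∘ ω⁻¹ ∘ d` is the BV Laplacian. -/
theorem delta2_is_BV_laplacian (v : DForms n)
    (hsupp : ∀ b ∈ v.support,
      b.2.1 = 0 ∧ b.2.2.2 = Finset.univ ∧ Even b.2.2.1.card) :
    ∃ β : DForms n, dRham n (AlphaOp n v) = DeltaTimesTop n v + Wmul n β := by
  refine Finsupp.exists_eq_add_of_forall_single (dRham n ∘ₗ AlphaOp n) _ (Wmul n) v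
    fun ⟨a, w, S, T⟩ hb => ?_
  obtain rfl : T = univ := (hsupp _ hb).2.1
  exact ⟨_, dRham_alphaOp_single_univ n a w S⟩

end
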